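/- arXiv:2312.08322 — 2 statements merged into one kernel-verified Lean document; each statement's English description precedes it below -/
import Mathlib

section
/- For μ = 0 (independent errors) and all p ∈ (0, 1/2), the [[6,1]] DQ code has strictly smaller failure probability than the [[6,1]] QD code: 2r(1−r) < 3q²(1−q)+q³, where r = 3p²−2p³ and q = 2p(1−p). -/
theorem qd_failure_sub_dq_failure (p : ℝ) :
    3 * (2 * p * (1 - p)) ^ 2 * (1 - 2 * p * (1 - p)) + (2 * p * (1 - p)) ^ 3
      - 2 * (3 * p ^ 2 - 2 * p ^ 3) * (1 - (3 * p ^ 2 - 2 * p ^ 3))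
      = 6 * (p * (1 - p) * (1 - 2 * p)) ^ 2 := by
  ring

/-- For independent errors (μ = 0) and all p ∈ (0, 1/2), the [[6,1]] DQ code has strictly
smaller failure probability than the [[6,1]] QD code: 2r(1−r) < 3q²(1−q)+q³, where
r = 3p²−2p³ and q = 2p(1−p). -/
theorem stmt_10 (p : ℝ) (h0 : 0 < p) (h1 : p < 1 / 2) :
    2 * (3 * p ^ 2 - 2 * p ^ 3) * (1 - (3 * p ^ 2 - 2 * p ^ 3))
      < 3 * (2 * p * (1 - p)) ^ 2 * (1 - 2 * p * (1 - p)) + (2 * p * (1 - p)) ^ 3 := by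
  have hne : p * (1 - p) * (1 - 2 * p) ≠ 0 :=
    (mul_pos (mul_pos h0 (by linarith)) (by linarith)).ne'
  rw [← sub_pos, qd_failure_sub_dq_failure]
  positivity
end

section
/- The [[6,1]] DQ code corrects the 32 errors listed in its degeneracy equivalence class: for any two errors E, E' in the same set of the class (e.g., {XIIIII, IXXXXX}), E|w⟩ = E'|w⟩ up to a global phase for both codewords w, and for errors E, F drawn from different sets, ⟨0_L|E†F|1_L⟩ = 0 and ⟨0_L|E†F|0_L⟩ = ⟨1_L|E†F|1_L⟩ (Knill–Laflamme conditions). -/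
open Matrix Kronecker

noncomputable def PX : Matrix (Fin 2) (Fin 2) ℂ := !![0, 1; 1, 0]

abbrev T6 := Fin 2 × Fin 2 × Fin 2 × Fin 2 × Fin 2 × Fin 2

noncomputable def t6 (A B C D E F : Matrix (Fin 2) (Fin 2) ℂ) : Matrix T6 T6 ℂ :=
  A ⊗ₖ (B ⊗ₖ (C ⊗ₖ (D ⊗ₖ (E ⊗ₖ F))))

noncomputable def g (b : Bool) : Matrix (Fin 2) (Fin 2) ℂ := if b then PX else 1

/-- Bit-flip error with pattern f. -/
noncomputable def P (f : Fin 6 → Bool) : Matrix T6 T6 ℂ :=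
  t6 (g (f 0)) (g (f 1)) (g (f 2)) (g (f 3)) (g (f 4)) (g (f 5))

/-- Membership in the correctable set {III,XII,IXI,IIX}^{⊗2}: at most one flip in each
three-qubit block. -/
def ok (f : Fin 6 → Bool) : Prop :=
  ((if f 0 then 1 else 0) + (if f 1 then 1 else 0) + (if f 2 then (1 : ℕ) else 0) ≤ 1) ∧
  ((if f 3 then 1 else 0) + (if f 4 then 1 else 0) + (if f 5 then (1 : ℕ) else 0) ≤ 1)

def kk (a b c d e f : Fin 2) : T6 → ℂ := fun p => if p = (a, b, c, d, e, f) then 1 else 0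

/-- Normalized [[6,1]] DQ codewords. -/
noncomputable def w0 : T6 → ℂ := ((Real.sqrt 2 : ℂ))⁻¹ • (kk 0 0 0 0 0 0 + kk 1 1 1 1 1 1)
noncomputable def w1 : T6 → ℂ := ((Real.sqrt 2 : ℂ))⁻¹ • (kk 0 0 0 1 1 1 + kk 1 1 1 0 0 0)

/-!
Bit-flip errors are permutation matrices of the computational basis, and `f ↦ P f` turns xor of
flip patterns into matrix multiplication, with every `P f` hermitian. Since `X^{⊗6}` fixes both
codewords, `P f` and `P (¬f) = P f * X^{⊗6}` agree on the code. The logical operator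
`X̄ = IIIXXX` maps `|0_L⟩` to `|1_L⟩` and commutes with every error, so
`⟨1_L|E|1_L⟩ = ⟨0_L|E|0_L⟩` and `⟨0_L|E|1_L⟩ = ⟨0_L|E X̄|0_L⟩`. The latter vanishes unless
`E X̄ ∈ {I, X^{⊗6}}`, i.e. unless `E` flips a whole block of three qubits, which `E = E_f† E_h`
never does when `E_f`, `E_h` each flip at most one qubit per block.
-/

def flipIf (b : Bool) (x : Fin 2) : Fin 2 := if b then x + 1 else x

def bitFlip (f : Fin 6 → Bool) (q : T6) : T6 :=
  (flipIf (f 0) q.1, flipIf (f 1) q.2.1, flipIf (f 2) q.2.2.1, flipIf (f 3) q.2.2.2.1,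
    flipIf (f 4) q.2.2.2.2.1, flipIf (f 5) q.2.2.2.2.2)

def logicalX : Fin 6 → Bool := ![false, false, false, true, true, true]

lemma g_apply (b : Bool) (x y : Fin 2) : g b x y = if x = flipIf b y then 1 else 0 := by
  cases b
  · simp [g, flipIf, Matrix.one_apply]
  · fin_cases x <;> fin_cases y <;> simp [g, PX, flipIf]

lemma P_apply (f : Fin 6 → Bool) (p q : T6) : P f p q = if p = bitFlip f q then 1 else 0 := by
  obtain ⟨p0, p1, p2, p3, p4, p5⟩ := p
  obtain ⟨q0, q1, q2, q3, q4, q5⟩ := q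
  simp only [P, t6, kroneckerMap_apply, g_apply, bitFlip, Prod.mk.injEq]
  split_ifs <;> simp_all

lemma P_mulVec_single (f : Fin 6 → Bool) (q : T6) :
    P f *ᵥ Pi.single q 1 = Pi.single (bitFlip f q) 1 := by
  ext p
  simp [P_apply, Pi.single_apply]

lemma PX_mul_self : PX * PX = 1 := by
  ext i j; fin_cases i <;> fin_cases j <;> simp [PX]

lemma g_mul (a b : Bool) : g a * g b = g (a ^^ b) := by
  cases a <;> cases b <;> simp [g, PX_mul_self]

lemma g_conjTranspose (b : Bool) : (g b)ᴴ = g b := by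
  cases b
  · simp [g]
  · ext i j; fin_cases i <;> fin_cases j <;> simp [g, PX]

lemma P_mul (f h : Fin 6 → Bool) : P f * P h = P (fun i => f i ^^ h i) := by
  simp only [P, t6, ← mul_kronecker_mul, g_mul]

lemma P_conjTranspose (f : Fin 6 → Bool) : (P f)ᴴ = P f := by
  simp only [P, t6, conjTranspose_kronecker, g_conjTranspose]

lemma star_P_mulVec_dotProduct_P_mulVec_P_mulVec (c d : Fin 6 → Bool) (v : T6 → ℂ) :
    star (P c *ᵥ v) ⬝ᵥ P d *ᵥ (P c *ᵥ v) = star v ⬝ᵥ P d *ᵥ v := by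
  rw [star_mulVec, ← dotProduct_mulVec, mulVec_mulVec, mulVec_mulVec, P_conjTranspose, P_mul,
    P_mul]
  congr 3
  funext i
  cases c i <;> cases d i <;> rfl

lemma flipIf_left_injective (x : Fin 2) : Function.Injective (flipIf · x) := by
  intro a b; revert a b x; decide

lemma bitFlip_left_injective (q : T6) : Function.Injective (bitFlip · q) := by
  intro e e' h
  simp only [bitFlip, Prod.mk.injEq] at h
  obtain ⟨h0, h1, h2, h3, h4, h5⟩ := h
  funext i
  fin_cases i
  exacts [flipIf_left_injective _ h0, flipIf_left_injective _ h1, flipIf_left_injective _ h2,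
    flipIf_left_injective _ h3, flipIf_left_injective _ h4, flipIf_left_injective _ h5]

noncomputable def pairState (a b : T6) : T6 → ℂ :=
  (Real.sqrt 2 : ℂ)⁻¹ • (Pi.single a 1 + Pi.single b 1)

lemma pairState_comm (a b : T6) : pairState a b = pairState b a := by
  rw [pairState, add_comm, pairState]

lemma P_mulVec_pairState (f : Fin 6 → Bool) (a b : T6) :
    P f *ᵥ pairState a b = pairState (bitFlip f a) (bitFlip f b) := by
  rw [pairState, mulVec_smul, mulVec_add, P_mulVec_single, P_mulVec_single, pairState]

lemma star_pairState_dotProduct_eq_zero {a b a' b' : T6} (haa : a ≠ a') (hab : a ≠ b')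
    (hba : b ≠ a') (hbb : b ≠ b') : star (pairState a b) ⬝ᵥ pairState a' b' = 0 := by
  simp [pairState, haa, hab, hba, hbb]

lemma kk_eq_single (a b c d e f : Fin 2) : kk a b c d e f = Pi.single (a, b, c, d, e, f) 1 := by
  funext p
  simp [kk, Pi.single_apply]

lemma w0_eq_pairState : w0 = pairState (0, 0, 0, 0, 0, 0) (1, 1, 1, 1, 1, 1) := by
  rw [w0, kk_eq_single, kk_eq_single, pairState]

lemma w1_eq_pairState : w1 = pairState (0, 0, 0, 1, 1, 1) (1, 1, 1, 0, 0, 0) := by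
  rw [w1, kk_eq_single, kk_eq_single, pairState]

lemma P_not (f : Fin 6 → Bool) : P (fun i => !f i) = P f * P (fun _ => true) := by
  simp [P_mul]

lemma P_const_true_mulVec_w0 : P (fun _ => true) *ᵥ w0 = w0 := by
  rw [w0_eq_pairState, P_mulVec_pairState, pairState_comm]
  rfl

lemma P_const_true_mulVec_w1 : P (fun _ => true) *ᵥ w1 = w1 := by
  rw [w1_eq_pairState, P_mulVec_pairState, pairState_comm]
  rfl

lemma P_logicalX_mulVec_w0 : P logicalX *ᵥ w0 = w1 := by
  rw [w0_eq_pairState, P_mulVec_pairState, w1_eq_pairState]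
  rfl

lemma star_w0_dotProduct_P_mulVec_w0_eq_zero {e : Fin 6 → Bool} (h0 : e ≠ fun _ => false)
    (h1 : e ≠ fun _ => true) : star w0 ⬝ᵥ P e *ᵥ w0 = 0 := by
  have h0' := fun q => ((bitFlip_left_injective q).ne h0).symm
  have h1' := fun q => ((bitFlip_left_injective q).ne h1).symm
  rw [w0_eq_pairState, P_mulVec_pairState]
  apply star_pairState_dotProduct_eq_zero
  exacts [h0' (0, 0, 0, 0, 0, 0), h1' (1, 1, 1, 1, 1, 1), h1' (0, 0, 0, 0, 0, 0),
    h0' (1, 1, 1, 1, 1, 1)]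

lemma not_xor_all_of_weight_le_one {a b c a' b' c' : Bool}
    (h : (if a then 1 else 0) + (if b then 1 else 0) + (if c then (1 : ℕ) else 0) ≤ 1)
    (h' : (if a' then 1 else 0) + (if b' then 1 else 0) + (if c' then (1 : ℕ) else 0) ≤ 1) :
    ¬((a ^^ a') = true ∧ (b ^^ b') = true ∧ (c ^^ c') = true) := by
  revert a b c a' b' c'; decide

lemma xor_logicalX_ne_const {f h : Fin 6 → Bool} (hf : ok f) (hh : ok h) (b : Bool) :
    (fun i => f i ^^ h i ^^ logicalX i) ≠ fun _ => b := by
  intro hd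
  have hi := congrFun hd
  cases b
  · exact not_xor_all_of_weight_le_one hf.2 hh.2
      ⟨by simpa [logicalX] using hi 3, by simpa [logicalX] using hi 4,
        by simpa [logicalX] using hi 5⟩
  · exact not_xor_all_of_weight_le_one hf.1 hh.1
      ⟨by simpa [logicalX] using hi 0, by simpa [logicalX] using hi 1,
        by simpa [logicalX] using hi 2⟩

/-- Degeneracy within each pair {E, X^{⊗6}E} of the equivalence class (equal action on both
codewords up to a global phase), and the Knill–Laflamme conditions across distinct pairs. -/
theorem stmt_17 :
    (∀ f : Fin 6 → Bool, ok f →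
      ∃ c : ℂ, ‖c‖ = 1 ∧
        (P f).mulVec w0 = c • (P (fun i => !(f i))).mulVec w0 ∧
        (P f).mulVec w1 = c • (P (fun i => !(f i))).mulVec w1) ∧
    (∀ f h : Fin 6 → Bool, ok f → ok h → h ≠ f → h ≠ (fun i => !(f i)) →
      star w0 ⬝ᵥ ((P f)ᴴ * P h).mulVec w1 = 0 ∧
      star w0 ⬝ᵥ ((P f)ᴴ * P h).mulVec w0 = star w1 ⬝ᵥ ((P f)ᴴ * P h).mulVec w1) := by
  refine ⟨fun f _ => ⟨1, norm_one, ?_, ?_⟩, fun f h hf hh _ _ => ?_⟩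
  · rw [one_smul, P_not, ← mulVec_mulVec, P_const_true_mulVec_w0]
  · rw [one_smul, P_not, ← mulVec_mulVec, P_const_true_mulVec_w1]
  rw [P_conjTranspose, P_mul, ← P_logicalX_mulVec_w0, star_P_mulVec_dotProduct_P_mulVec_P_mulVec, mulVec_mulVec, P_mul]
  exact ⟨star_w0_dotProduct_P_mulVec_w0_eq_zero (xor_logicalX_ne_const hf hh false)
    (xor_logicalX_ne_const hf hh true), rfl⟩
end
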